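/- arXiv:2508.00547 — 2 statements merged into one kernel-verified Lean document; each statement's English description precedes it below -/
import Mathlib

section
/- Let R be a commutative ring in which 2 is invertible, M a free R-module of finite rank with orthogonalizable symmetric bilinear form β, and Cl(M,β) the Clifford algebra (with relation γ(X)γ(Y) + γ(Y)γ(X) = β(X,Y)). Then there is a unique R-linear map φ : so(M,β) → Cl(M,β) with φ(R_{β,a,b}) = (1/2)[γ(a), γ(b)] for all a,b ∈ M, and φ is a morphism of Lie algebras over R (where Cl(M,β) is a Lie algebra under commutators). -/
noncomputable def elemSkew {R M : Type*} [CommRing R] [AddCommGroup M] [Module R M]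
    (β : M →ₗ[R] M →ₗ[R] R) (a b : M) : M →ₗ[R] M :=
  (β b).smulRight a - (β a).smulRight b

noncomputable def skewSubmodule (R M : Type*) [CommRing R] [AddCommGroup M] [Module R M]
    (β : M →ₗ[R] M →ₗ[R] R) : Submodule R (M →ₗ[R] M) where
  carrier := {T | ∀ u v, β (T u) v + β u (T v) = 0}
  zero_mem' := by intro u v; simp
  add_mem' := by
    intro T S hT hS u v
    have h1 := hT u v
    have h2 := hS u v
    simp only [LinearMap.add_apply, map_add] at *
    linear_combination h1 + h2
  smul_mem' := by
    intro c T hT u v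
    have h := hT u v
    simp only [LinearMap.smul_apply, map_smul, smul_eq_mul]
    linear_combination c * h

noncomputable def halfQuadratic {R M : Type*} [CommRing R] [Invertible (2 : R)]
    [AddCommGroup M] [Module R M] (β : M →ₗ[R] M →ₗ[R] R) : QuadraticForm R M :=
  LinearMap.BilinMap.toQuadraticMap ((⅟(2 : R)) • β)

section Aux
variable {R : Type*} [CommRing R] [Invertible (2 : R)]
  {M : Type*} [AddCommGroup M] [Module R M]
  (β : M →ₗ[R] M →ₗ[R] R)

local notation "ιQ" => CliffordAlgebra.ι (halfQuadratic β)

lemma elemSkew_apply (a b v : M) : elemSkew β a b v = β b v • a - β a v • b := rfl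

lemma elemSkew_mem (hβsymm : ∀ u v, β u v = β v u) (a b : M) :
    elemSkew β a b ∈ skewSubmodule R M β := by
  intro u v
  simp only [elemSkew_apply, map_sub, map_smul, LinearMap.sub_apply, LinearMap.smul_apply,
    smul_eq_mul]
  rw [hβsymm u a, hβsymm u b]
  ring

lemma iota_anticomm (hβsymm : ∀ u v, β u v = β v u) (a b : M) :
    ιQ a * ιQ b + ιQ b * ιQ a = algebraMap R _ (β a b) := by
  rw [CliffordAlgebra.ι_mul_ι_add_swap]
  congr 1
  rw [halfQuadratic, LinearMap.BilinMap.polar_toQuadraticMap]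
  simp only [LinearMap.smul_apply, smul_eq_mul]
  rw [hβsymm b a]
  rw [← mul_add, ← two_mul, ← mul_assoc, invOf_mul_self, one_mul]

lemma iota_mul_eq (hβsymm : ∀ u v, β u v = β v u) (a b : M) :
    ιQ a * ιQ b = β a b • (1 : CliffordAlgebra (halfQuadratic β)) - ιQ b * ιQ a := by
  rw [eq_sub_iff_add_eq, iota_anticomm β hβsymm, Algebra.algebraMap_eq_smul_one]

end Aux

section Main
variable {R : Type*} [CommRing R] [Invertible (2 : R)]
  {M : Type*} [AddCommGroup M] [Module R M]
  {n : ℕ} (e : Module.Basis (Fin n) R M)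
  (β : M →ₗ[R] M →ₗ[R] R) (hβsymm : ∀ u v, β u v = β v u)
  (honb : ∀ i j, β (e i) (e j) = if i = j then 1 else 0)

local notation "ιQ" => CliffordAlgebra.ι (halfQuadratic β)

include hβsymm honb
set_option linter.unusedSectionVars false

/-- expansion in orthonormal basis -/
lemma repr_eq (m : M) (i : Fin n) : β (e i) m = e.repr m i := by
  conv_lhs => rw [← Module.Basis.sum_repr e m]
  rw [map_sum]
  simp [honb, mul_ite, Finset.sum_ite_eq]

lemma expand (m : M) : ∑ i, β (e i) m • e i = m := by
  simp only [repr_eq e β hβsymm honb]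
  exact Module.Basis.sum_repr e m

lemma iota_expand (m : M) :
    ιQ m = ∑ i, β (e i) m • ιQ (e i) := by
  conv_lhs => rw [← expand e β hβsymm honb m]
  rw [map_sum]
  simp only [map_smul]

lemma hx (x y : M) :
    ∑ i, ∑ j, (β (e i) x * β (e j) y) • (ιQ (e i) * ιQ (e j)) = ιQ x * ιQ y := by
  rw [iota_expand e β hβsymm honb x, iota_expand e β hβsymm honb y, Finset.sum_mul]
  refine Finset.sum_congr rfl fun i _ => ?_
  rw [Finset.mul_sum]
  refine Finset.sum_congr rfl fun j _ => ?_
  rw [smul_mul_smul_comm]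

lemma hx' (x y : M) :
    ∑ i, ∑ j, (β (e i) x * β (e j) y) • (ιQ (e j) * ιQ (e i)) = ιQ y * ιQ x := by
  rw [Finset.sum_comm]
  rw [← hx e β hβsymm honb y x]
  refine Finset.sum_congr rfl fun j _ => Finset.sum_congr rfl fun i _ => ?_
  rw [mul_comm]

/-- The auxiliary linear map on all endomorphisms. -/
noncomputable def Fmap : (M →ₗ[R] M) →ₗ[R] CliffordAlgebra (halfQuadratic β) where
  toFun T := (⅟(2:R) * ⅟(2:R)) • ∑ i, ∑ j, β (e i) (T (e j)) •
      (ιQ (e i) * ιQ (e j) - ιQ (e j) * ιQ (e i))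
  map_add' T S := by
    simp only [LinearMap.add_apply, map_add, add_smul, Finset.sum_add_distrib, smul_add]
  map_smul' c T := by
    simp only [LinearMap.smul_apply, map_smul, smul_eq_mul, RingHom.id_apply, mul_smul,
      Finset.smul_sum, smul_comm c]

lemma Fmap_elem (a b : M) :
    Fmap e β (elemSkew β a b) = ⅟(2:R) • (ιQ a * ιQ b - ιQ b * ιQ a) := by
  have hco : ∀ i j, β (e i) (elemSkew β a b (e j))
      = β (e i) a * β (e j) b - β (e i) b * β (e j) a := by
    intro i j
    simp only [elemSkew_apply, map_sub, map_smul, smul_eq_mul]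
    rw [hβsymm b (e j), hβsymm a (e j)]
    ring
  have key : (∑ i, ∑ j, β (e i) (elemSkew β a b (e j)) •
        (ιQ (e i) * ιQ (e j) - ιQ (e j) * ιQ (e i)))
      = (2:R) • (ιQ a * ιQ b - ιQ b * ιQ a) := by
    have step : ∀ i, ∑ j, β (e i) (elemSkew β a b (e j)) •
          (ιQ (e i) * ιQ (e j) - ιQ (e j) * ιQ (e i))
        = ((∑ j, (β (e i) a * β (e j) b) • (ιQ (e i) * ιQ (e j)))
          - (∑ j, (β (e i) a * β (e j) b) • (ιQ (e j) * ιQ (e i))))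
          - ((∑ j, (β (e i) b * β (e j) a) • (ιQ (e i) * ιQ (e j)))
          - (∑ j, (β (e i) b * β (e j) a) • (ιQ (e j) * ιQ (e i)))) := by
      intro i
      rw [← Finset.sum_sub_distrib, ← Finset.sum_sub_distrib, ← Finset.sum_sub_distrib]
      refine Finset.sum_congr rfl fun j _ => ?_
      rw [hco i j]
      rw [sub_smul, smul_sub, smul_sub]
    rw [Finset.sum_congr rfl fun i _ => step i]
    rw [Finset.sum_sub_distrib, Finset.sum_sub_distrib, Finset.sum_sub_distrib]
    rw [hx e β hβsymm honb a b, hx' e β hβsymm honb a b,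
      hx e β hβsymm honb b a, hx' e β hβsymm honb b a]
    module
  show (⅟(2:R) * ⅟(2:R)) • ∑ i, ∑ j, β (e i) (elemSkew β a b (e j)) •
      (ιQ (e i) * ιQ (e j) - ιQ (e j) * ιQ (e i)) = _
  rw [key, smul_smul, mul_assoc, invOf_mul_self, mul_one]

lemma vec_ext {m m' : M} (h : ∀ l, β (e l) m = β (e l) m') : m = m' := by
  apply e.repr.injective
  ext l
  rw [← repr_eq e β hβsymm honb, ← repr_eq e β hβsymm honb, h]

lemma decomp {T : M →ₗ[R] M} (hT : T ∈ skewSubmodule R M β) :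
    T = ∑ i, ∑ j, (⅟(2:R) * β (e i) (T (e j))) • elemSkew β (e i) (e j) := by
  have hskew : ∀ j k : Fin n, β (e k) (T (e j)) = - β (e j) (T (e k)) := by
    intro j k
    rw [hβsymm (e k) (T (e j))]
    have h := hT (e j) (e k)
    linear_combination h
  refine Module.Basis.ext e fun k => ?_
  refine vec_ext e β hβsymm honb fun l => ?_
  simp only [LinearMap.sum_apply, LinearMap.smul_apply, elemSkew_apply, map_sum, map_smul,
    map_sub, smul_eq_mul]
  simp only [honb, mul_ite, ite_mul, mul_one, mul_zero, one_mul, zero_mul, mul_sub, sub_zero,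
    zero_sub, Finset.sum_sub_distrib, Finset.sum_ite_eq, Finset.sum_ite_eq', Finset.mem_univ,
    if_true, Finset.sum_neg_distrib, Finset.sum_ite_irrel, Finset.sum_const_zero]
  rw [hskew l k]
  linear_combination (-(β (e l)) (T (e k))) * invOf_mul_self (2:R)

lemma keyK_elem (a b v : M) :
    Fmap e β (elemSkew β a b) * ιQ v - ιQ v * Fmap e β (elemSkew β a b)
      = ιQ (elemSkew β a b v) := by
  rw [Fmap_elem e β hβsymm honb, elemSkew_apply, map_sub, map_smul, map_smul]
  have hbv := iota_mul_eq β hβsymm b v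
  have hav := iota_mul_eq β hβsymm a v
  have h3 : ιQ a * ιQ b * ιQ v
      = β b v • ιQ a - β a v • ιQ b + ιQ v * (ιQ a * ιQ b) := by
    rw [mul_assoc, hbv, mul_sub, mul_smul_comm, mul_one, ← mul_assoc, hav, sub_mul,
      smul_mul_assoc, one_mul, mul_assoc]
    module
  have h4 : ιQ b * ιQ a * ιQ v
      = β a v • ιQ b - β b v • ιQ a + ιQ v * (ιQ b * ιQ a) := by
    rw [mul_assoc, hav, mul_sub, mul_smul_comm, mul_one, ← mul_assoc, hbv, sub_mul,
      smul_mul_assoc, one_mul, mul_assoc]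
    module
  have key : (ιQ a * ιQ b - ιQ b * ιQ a) * ιQ v - ιQ v * (ιQ a * ιQ b - ιQ b * ιQ a)
      = (2:R) • (β b v • ιQ a - β a v • ιQ b) := by
    rw [sub_mul, mul_sub, h3, h4]
    module
  rw [smul_mul_assoc, mul_smul_comm, ← smul_sub, key, smul_smul, invOf_mul_self, one_smul]

lemma keyK {T : M →ₗ[R] M} (hT : T ∈ skewSubmodule R M β) (v : M) :
    Fmap e β T * ιQ v - ιQ v * Fmap e β T = ιQ (T v) := by
  conv_lhs => rw [decomp e β hβsymm honb hT]
  conv_rhs => rw [decomp e β hβsymm honb hT]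
  simp only [map_sum, map_smul, LinearMap.sum_apply, LinearMap.smul_apply, Finset.sum_mul,
    Finset.mul_sum, smul_mul_assoc, mul_smul_comm]
  rw [← Finset.sum_sub_distrib]
  refine Finset.sum_congr rfl fun i _ => ?_
  rw [← Finset.sum_sub_distrib]
  refine Finset.sum_congr rfl fun j _ => ?_
  rw [← smul_sub, keyK_elem e β hβsymm honb]

lemma lemL {S : M →ₗ[R] M} (hS : S ∈ skewSubmodule R M β) (p q : M) :
    S ∘ₗ elemSkew β p q - elemSkew β p q ∘ₗ S = elemSkew β (S p) q + elemSkew β p (S q) := by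
  ext v
  simp only [LinearMap.sub_apply, LinearMap.comp_apply, LinearMap.add_apply, elemSkew_apply,
    map_sub, map_smul]
  rw [show β q (S v) = -β (S q) v by linear_combination hS q v,
      show β p (S v) = -β (S p) v by linear_combination hS p v]
  module


lemma lie_elem {S : M →ₗ[R] M} (hS : S ∈ skewSubmodule R M β) (p q : M) :
    Fmap e β (S ∘ₗ elemSkew β p q - elemSkew β p q ∘ₗ S)
      = Fmap e β S * Fmap e β (elemSkew β p q)
        - Fmap e β (elemSkew β p q) * Fmap e β S := by
  rw [lemL e β hβsymm honb hS p q, map_add, Fmap_elem e β hβsymm honb,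
    Fmap_elem e β hβsymm honb, Fmap_elem e β hβsymm honb]
  set A := Fmap e β S with hA
  have hp := keyK e β hβsymm honb hS p
  have hq := keyK e β hβsymm honb hS q
  have hp' : A * ιQ p = ιQ (S p) + ιQ p * A := by rw [← hp]; noncomm_ring
  have hq' : A * ιQ q = ιQ (S q) + ιQ q * A := by rw [← hq]; noncomm_ring
  have e1 : A * (ιQ p * ιQ q) = ιQ (S p) * ιQ q + ιQ p * ιQ (S q) + ιQ p * ιQ q * A := by
    rw [← mul_assoc, hp', add_mul, mul_assoc (ιQ p), hq']; noncomm_ring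
  have e2 : A * (ιQ q * ιQ p) = ιQ (S q) * ιQ p + ιQ q * ιQ (S p) + ιQ q * ιQ p * A := by
    rw [← mul_assoc, hq', add_mul, mul_assoc (ιQ q), hp']; noncomm_ring
  have main : A * (ιQ p * ιQ q - ιQ q * ιQ p) - (ιQ p * ιQ q - ιQ q * ιQ p) * A
      = (ιQ (S p) * ιQ q - ιQ q * ιQ (S p)) + (ιQ p * ιQ (S q) - ιQ (S q) * ιQ p) := by
    rw [mul_sub, sub_mul, e1, e2]; noncomm_ring
  rw [mul_smul_comm, smul_mul_assoc, ← smul_sub, main, smul_add]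

lemma lieFull {S T : M →ₗ[R] M} (hS : S ∈ skewSubmodule R M β)
    (hT : T ∈ skewSubmodule R M β) :
    Fmap e β (S ∘ₗ T - T ∘ₗ S)
      = Fmap e β S * Fmap e β T - Fmap e β T * Fmap e β S := by
  have hdec := decomp e β hβsymm honb hT
  conv_lhs => rw [hdec]
  conv_rhs => rw [hdec]
  simp only [← Module.End.mul_eq_comp, map_sub, map_sum, map_smul, Finset.mul_sum,
    Finset.sum_mul, mul_smul_comm, smul_mul_assoc]
  rw [← Finset.sum_sub_distrib, ← Finset.sum_sub_distrib]
  refine Finset.sum_congr rfl fun i _ => ?_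
  rw [← Finset.sum_sub_distrib, ← Finset.sum_sub_distrib]
  refine Finset.sum_congr rfl fun j _ => ?_
  rw [← smul_sub, ← smul_sub]
  congr 1
  rw [← map_sub, Module.End.mul_eq_comp, Module.End.mul_eq_comp,
    lie_elem e β hβsymm honb hS]

end Main

/-- There is a unique `R`-linear map `φ : so(M,β) → Cl(M,β)` with
`φ(R_{β,a,b}) = ½[γ(a), γ(b)]`, and `φ` is a morphism of Lie algebras over `R`
(commutator brackets on both sides). -/
theorem exists_unique_so_to_clifford
    (R : Type*) [CommRing R] [Invertible (2 : R)]
    (M : Type*) [AddCommGroup M] [Module R M]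
    (n : ℕ) (e : Module.Basis (Fin n) R M)
    (β : M →ₗ[R] M →ₗ[R] R) (hβsymm : ∀ u v, β u v = β v u)
    (honb : ∀ i j, β (e i) (e j) = if i = j then 1 else 0) :
    ∃ φ : ↥(skewSubmodule R M β) →ₗ[R] CliffordAlgebra (halfQuadratic β),
      (∀ (a b : M) (h : elemSkew β a b ∈ skewSubmodule R M β),
        φ ⟨elemSkew β a b, h⟩ = (⅟(2 : R)) •
          (CliffordAlgebra.ι (halfQuadratic β) a * CliffordAlgebra.ι (halfQuadratic β) b
            - CliffordAlgebra.ι (halfQuadratic β) b * CliffordAlgebra.ι (halfQuadratic β) a)) ∧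
      (∀ (S T : ↥(skewSubmodule R M β))
          (h : ((S : M →ₗ[R] M) ∘ₗ (T : M →ₗ[R] M) - (T : M →ₗ[R] M) ∘ₗ (S : M →ₗ[R] M))
              ∈ skewSubmodule R M β),
        φ ⟨(S : M →ₗ[R] M) ∘ₗ (T : M →ₗ[R] M) - (T : M →ₗ[R] M) ∘ₗ (S : M →ₗ[R] M), h⟩
          = φ S * φ T - φ T * φ S) ∧
      (∀ φ' : ↥(skewSubmodule R M β) →ₗ[R] CliffordAlgebra (halfQuadratic β),
        (∀ (a b : M) (h : elemSkew β a b ∈ skewSubmodule R M β),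
          φ' ⟨elemSkew β a b, h⟩ = (⅟(2 : R)) •
            (CliffordAlgebra.ι (halfQuadratic β) a * CliffordAlgebra.ι (halfQuadratic β) b
              - CliffordAlgebra.ι (halfQuadratic β) b * CliffordAlgebra.ι (halfQuadratic β) a))
        → φ' = φ) := by
  refine ⟨(Fmap e β).comp (Submodule.subtype _), fun a b h => ?_, fun S T h => ?_,
    fun φ' hφ' => ?_⟩
  · exact Fmap_elem e β hβsymm honb a b
  · exact lieFull e β hβsymm honb S.2 T.2
  · refine LinearMap.ext fun x => ?_
    have hdec := decomp e β hβsymm honb x.2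
    have hx : x = ∑ i, ∑ j, (⅟(2:R) * β (e i) ((x : M →ₗ[R] M) (e j))) •
        (⟨elemSkew β (e i) (e j), elemSkew_mem β hβsymm (e i) (e j)⟩ :
          skewSubmodule R M β) := by
      apply Subtype.ext
      rw [show ((∑ i, ∑ j, (⅟(2:R) * β (e i) ((x : M →ₗ[R] M) (e j))) •
          (⟨elemSkew β (e i) (e j), elemSkew_mem β hβsymm (e i) (e j)⟩ :
            skewSubmodule R M β) : skewSubmodule R M β) : M →ₗ[R] M)
        = ∑ i, ∑ j, (⅟(2:R) * β (e i) ((x : M →ₗ[R] M) (e j))) • elemSkew β (e i) (e j)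
        from by simp]
      exact hdec
    conv_lhs => rw [hx]
    conv_rhs => rw [hx]
    simp only [map_sum, map_smul]
    refine Finset.sum_congr rfl fun i _ => Finset.sum_congr rfl fun j _ => ?_
    congr 1
    rw [hφ' (e i) (e j) (elemSkew_mem β hβsymm (e i) (e j))]
    exact (Fmap_elem e β hβsymm honb (e i) (e j)).symm
end

section
/- Let V be a g_d-module over ℂ[t] with lowest weight structure: V = ⊕_{k≥0} ℂ[t]·v_{m+2k} where h̃·v_{m+2k} = (m+2k)v_{m+2k}, ỹ·v_m = 0, and for each k ≥ 0, x̃·v_{m+2k} = A_k(t)v_{m+2(k+1)} and ỹ·v_{m+2(k+1)} = B_k(t)v_{m+2k} with A_k, B_k nonzero polynomials. Then in V ⊗_{ℂ[t]} S (S the rank-2 spin module as above), the kernel of the Dirac operator D_d = (1/4)(x̃⊗γ'(ỹ) + ỹ⊗γ'(x̃)) is exactly ℂ[t]·(v_m ⊗ ỹ), this kernel intersects the image of D_d trivially, and hence the Dirac cohomology ker D_d/(ker D_d ∩ im D_d) is a free ℂ[t]-module of rank 1 on which h̃ (acting diagonally via the module action on V and via α(h̃) = (1/2)γ'(x̃)γ'(ỹ)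 − 1 on S) acts by the scalar m − 1. -/
open scoped TensorProduct

noncomputable section

/-- The Clifford action `γ'(ỹ)` on the spin module `S = ℂ[t]·1 ⊕ ℂ[t]·ỹ` (coordinates:
first = coefficient of `1`, second = coefficient of `ỹ`): `1 ↦ ỹ`, `ỹ ↦ 0`. -/
def spinGammaY : (Polynomial ℂ × Polynomial ℂ) →ₗ[Polynomial ℂ]
    (Polynomial ℂ × Polynomial ℂ) :=
  (LinearMap.inr (Polynomial ℂ) (Polynomial ℂ) (Polynomial ℂ)).comp
    (LinearMap.fst (Polynomial ℂ) (Polynomial ℂ) (Polynomial ℂ))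

/-- The Clifford action `γ'(x̃)` on the spin module: `1 ↦ 0`, `ỹ ↦ 4`. -/
def spinGammaX : (Polynomial ℂ × Polynomial ℂ) →ₗ[Polynomial ℂ]
    (Polynomial ℂ × Polynomial ℂ) :=
  (LinearMap.inl (Polynomial ℂ) (Polynomial ℂ) (Polynomial ℂ)).comp
    ((4 : Polynomial ℂ) • LinearMap.snd (Polynomial ℂ) (Polynomial ℂ) (Polynomial ℂ))

/-- The spin action `α(h̃) = ½γ'(x̃)γ'(ỹ) − 1` on `S`: it acts by `+1` on `1` and by
`−1` on `ỹ`. -/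
def spinAlphaH : (Polynomial ℂ × Polynomial ℂ) →ₗ[Polynomial ℂ]
    (Polynomial ℂ × Polynomial ℂ) :=
  LinearMap.prodMap LinearMap.id (-LinearMap.id)

/-- The Dirac operator `D_d = (1/4)(x̃ ⊗ γ'(ỹ) + ỹ ⊗ γ'(x̃))` acting on `V ⊗ S`. -/
def diracOp (L : Type*) [LieRing L] [LieAlgebra (Polynomial ℂ) L]
    (V : Type*) [AddCommGroup V] [Module (Polynomial ℂ) V]
    [LieRingModule L V] [LieModule (Polynomial ℂ) L V] (X Y : L) :
    (V ⊗[Polynomial ℂ] (Polynomial ℂ × Polynomial ℂ)) →ₗ[Polynomial ℂ]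
    (V ⊗[Polynomial ℂ] (Polynomial ℂ × Polynomial ℂ)) :=
  Polynomial.C (1/4 : ℂ) •
    (TensorProduct.map ((LieModule.toEnd (Polynomial ℂ) L V) X) spinGammaY
      + TensorProduct.map ((LieModule.toEnd (Polynomial ℂ) L V) Y) spinGammaX)

/-- The diagonal action of `h̃` on `V ⊗ S`: via the module action on `V` and via
`α(h̃)` on `S`. -/
def diagH (L : Type*) [LieRing L] [LieAlgebra (Polynomial ℂ) L]
    (V : Type*) [AddCommGroup V] [Module (Polynomial ℂ) V]
    [LieRingModule L V] [LieModule (Polynomial ℂ) L V] (H : L) :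
    (V ⊗[Polynomial ℂ] (Polynomial ℂ × Polynomial ℂ)) →ₗ[Polynomial ℂ]
    (V ⊗[Polynomial ℂ] (Polynomial ℂ × Polynomial ℂ)) :=
  TensorProduct.map ((LieModule.toEnd (Polynomial ℂ) L V) H) LinearMap.id
    + TensorProduct.map LinearMap.id spinAlphaH

set_option maxHeartbeats 1600000 in
/-- For a lowest-weight family module `V = ⊕_{k≥0} ℂ[t]·v_{m+2k}` over
the deformation family `g_d` (the family analogue of a positive discrete series of
`SL(2,ℝ)`), the kernel of the Dirac operator on `V ⊗ S` is exactly `ℂ[t]·(v_m ⊗ ỹ)`;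
this kernel meets the image of the Dirac operator trivially; hence the Dirac cohomology
is a free `ℂ[t]`-module of rank 1 on which `h̃` (acting diagonally) acts by the scalar
`m − 1`. -/
theorem dirac_cohomology_discrete_series_family
    (L : Type*) [LieRing L] [LieAlgebra (Polynomial ℂ) L]
    (H X Y : L)
    (hHX : ⁅H, X⁆ = (2 : Polynomial ℂ) • X)
    (hHY : ⁅H, Y⁆ = (-2 : Polynomial ℂ) • Y)
    (hXY : ⁅X, Y⁆ = (Polynomial.X ^ 2 : Polynomial ℂ) • H)
    (V : Type*) [AddCommGroup V] [Module (Polynomial ℂ) V]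
    [LieRingModule L V] [LieModule (Polynomial ℂ) L V]
    (m : ℕ) (hm : 0 < m)
    (v : ℕ → V) (bV : Module.Basis ℕ (Polynomial ℂ) V) (hbV : ∀ k, bV k = v k)
    (A B : ℕ → Polynomial ℂ)
    (hA : ∀ k, A k ≠ 0) (hB : ∀ k, B k ≠ 0)
    (hH : ∀ k, ⁅H, v k⁆ = ((m + 2 * k : ℕ) : Polynomial ℂ) • v k)
    (hY0 : ⁅Y, v 0⁆ = 0)
    (hX : ∀ k, ⁅X, v k⁆ = A k • v (k + 1))
    (hY : ∀ k, ⁅Y, v (k + 1)⁆ = B k • v k) :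
    LinearMap.ker (diracOp L V X Y)
        = Submodule.span (Polynomial ℂ)
            {v 0 ⊗ₜ[Polynomial ℂ] ((0 : Polynomial ℂ), (1 : Polynomial ℂ))} ∧
    Disjoint (LinearMap.ker (diracOp L V X Y)) (LinearMap.range (diracOp L V X Y)) ∧
    (∀ c : Polynomial ℂ,
      c • (v 0 ⊗ₜ[Polynomial ℂ] ((0 : Polynomial ℂ), (1 : Polynomial ℂ))) = 0 → c = 0) ∧
    (∀ u ∈ LinearMap.ker (diracOp L V X Y),
      diagH L V H u = (((m : ℕ) : Polynomial ℂ) - 1) • u) := by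
  classical
  let e : (V ⊗[(Polynomial ℂ)] ((Polynomial ℂ) × (Polynomial ℂ))) ≃ₗ[(Polynomial ℂ)] V × V :=
    (TensorProduct.prodRight (Polynomial ℂ) (Polynomial ℂ) V (Polynomial ℂ) (Polynomial ℂ)).trans
      (LinearEquiv.prodCongr (TensorProduct.rid (Polynomial ℂ) V) (TensorProduct.rid (Polynomial ℂ) V))
  let b : Module.Basis (ℕ ⊕ ℕ) (Polynomial ℂ) (V ⊗[(Polynomial ℂ)] ((Polynomial ℂ) × (Polynomial ℂ))) := (bV.prod bV).map e.symm
  have hbl : ∀ k, b (Sum.inl k) = v k ⊗ₜ[(Polynomial ℂ)] ((1:(Polynomial ℂ)), (0:(Polynomial ℂ))) := by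
    intro k
    have h1 : e (v k ⊗ₜ[(Polynomial ℂ)] ((1:(Polynomial ℂ)), (0:(Polynomial ℂ)))) = (bV k, 0) := by
      simp [e, hbV]
    have h2 : (bV.prod bV) (Sum.inl k) = (bV k, 0) :=
      Prod.ext (Module.Basis.prod_apply_inl_fst bV bV k) (Module.Basis.prod_apply_inl_snd bV bV k)
    show e.symm ((bV.prod bV) (Sum.inl k)) = _
    rw [h2, ← h1, LinearEquiv.symm_apply_apply]
  have hbr : ∀ k, b (Sum.inr k) = v k ⊗ₜ[(Polynomial ℂ)] ((0:(Polynomial ℂ)), (1:(Polynomial ℂ))) := by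
    intro k
    have h1 : e (v k ⊗ₜ[(Polynomial ℂ)] ((0:(Polynomial ℂ)), (1:(Polynomial ℂ)))) = (0, bV k) := by
      simp [e, hbV]
    have h2 : (bV.prod bV) (Sum.inr k) = (0, bV k) :=
      Prod.ext (Module.Basis.prod_apply_inr_fst bV bV k) (Module.Basis.prod_apply_inr_snd bV bV k)
    show e.symm ((bV.prod bV) (Sum.inr k)) = _
    rw [h2, ← h1, LinearEquiv.symm_apply_apply]
  have hDt : ∀ (w : V) (p q : (Polynomial ℂ)),
      diracOp L V X Y (w ⊗ₜ[(Polynomial ℂ)] (p, q)) =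
        Polynomial.C (1/4 : ℂ) • (⁅X, w⁆ ⊗ₜ[(Polynomial ℂ)] ((0:(Polynomial ℂ)), p)
          + ⁅Y, w⁆ ⊗ₜ[(Polynomial ℂ)] ((4*q : (Polynomial ℂ)), (0:(Polynomial ℂ)))) := by
    intro w p q
    simp [diracOp, spinGammaY, spinGammaX, TensorProduct.map_tmul,
      LieModule.toEnd_apply_apply, mul_comm]
  have h4 : (Polynomial.C (1/4:ℂ)) * 4 = 1 := by
    rw [show (4 : (Polynomial ℂ)) = Polynomial.C (4:ℂ) from (map_ofNat Polynomial.C 4).symm,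
      ← Polynomial.C_mul]
    norm_num
  have hDl : ∀ k, diracOp L V X Y (b (Sum.inl k))
      = (Polynomial.C (1/4:ℂ) * A k) • b (Sum.inr (k+1)) := by
    intro k
    rw [hbl k, hDt, hX k, hbr (k+1)]
    simp [TensorProduct.smul_tmul', smul_smul, Prod.mk_zero_zero]
  have hDr0 : diracOp L V X Y (b (Sum.inr 0)) = 0 := by
    rw [hbr 0, hDt, hY0]
    simp [Prod.mk_zero_zero]
  have hDr : ∀ k, diracOp L V X Y (b (Sum.inr (k+1))) = B k • b (Sum.inl k) := by
    intro k
    rw [hbr (k+1), hDt, hY k, hbl k]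
    have : ((4*1 : (Polynomial ℂ)), (0:(Polynomial ℂ))) = (4:(Polynomial ℂ)) • ((1:(Polynomial ℂ)), (0:(Polynomial ℂ))) := by simp
    rw [this, TensorProduct.tmul_smul, TensorProduct.smul_tmul']
    have hz : (⁅X, v (k+1)⁆ ⊗ₜ[Polynomial ℂ] ((0:Polynomial ℂ), (0:Polynomial ℂ)))
        = (0 : V ⊗[Polynomial ℂ] (Polynomial ℂ × Polynomial ℂ)) := by
      rw [show ((0:Polynomial ℂ), (0:Polynomial ℂ)) = (0 : Polynomial ℂ × Polynomial ℂ) from rfl,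
        TensorProduct.tmul_zero]
    rw [hz, zero_add, ← TensorProduct.smul_tmul', smul_smul, h4, one_smul,
      TensorProduct.smul_tmul']
  -- coordinate identities
  have hc0 : ∀ w, b.repr (diracOp L V X Y w) (Sum.inr 0) = 0 := by
    intro w
    have key : (b.coord (Sum.inr 0)).comp (diracOp L V X Y) = 0 := by
      apply b.ext
      rintro (k | k)
      · simp [LinearMap.comp_apply, Module.Basis.coord_apply, hDl k, b.repr_self,
          Finsupp.single_apply]
      · cases k with
        | zero => simp [LinearMap.comp_apply, hDr0]
        | succ k =>
          simp [LinearMap.comp_apply, Module.Basis.coord_apply, hDr k, b.repr_self,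
            Finsupp.single_apply]
    simpa [Module.Basis.coord_apply] using LinearMap.congr_fun key w
  have hcl : ∀ (w) (k), b.repr (diracOp L V X Y w) (Sum.inr (k+1))
      = (Polynomial.C (1/4:ℂ) * A k) * b.repr w (Sum.inl k) := by
    intro w k
    have key : (b.coord (Sum.inr (k+1))).comp (diracOp L V X Y)
        = (Polynomial.C (1/4:ℂ) * A k) • b.coord (Sum.inl k) := by
      apply b.ext
      rintro (j | j)
      · by_cases h : j = k
        · subst h
          simp [LinearMap.comp_apply, Module.Basis.coord_apply, hDl j, b.repr_self, smul_eq_mul]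
        · simp [LinearMap.comp_apply, Module.Basis.coord_apply, hDl j, b.repr_self,
            Finsupp.single_apply, h, smul_eq_mul]
      · cases j with
        | zero =>
          simp [LinearMap.comp_apply, Module.Basis.coord_apply, hDr0, b.repr_self,
            Finsupp.single_apply, smul_eq_mul]
        | succ j =>
          simp [LinearMap.comp_apply, Module.Basis.coord_apply, hDr j, b.repr_self,
            Finsupp.single_apply, smul_eq_mul]
    simpa [Module.Basis.coord_apply, smul_eq_mul] using LinearMap.congr_fun key w
  have hcr : ∀ (w) (k), b.repr (diracOp L V X Y w) (Sum.inl k)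
      = B k * b.repr w (Sum.inr (k+1)) := by
    intro w k
    have key : (b.coord (Sum.inl k)).comp (diracOp L V X Y)
        = B k • b.coord (Sum.inr (k+1)) := by
      apply b.ext
      rintro (j | j)
      · simp [LinearMap.comp_apply, Module.Basis.coord_apply, hDl j, b.repr_self,
          Finsupp.single_apply, smul_eq_mul]
      · cases j with
        | zero =>
          simp [LinearMap.comp_apply, Module.Basis.coord_apply, hDr0, b.repr_self,
            Finsupp.single_apply, smul_eq_mul]
        | succ j =>
          by_cases h : j = k
          · subst h
            simp [LinearMap.comp_apply, Module.Basis.coord_apply, hDr j, b.repr_self, smul_eq_mul]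
          · simp [LinearMap.comp_apply, Module.Basis.coord_apply, hDr j, b.repr_self,
              Finsupp.single_apply, h, smul_eq_mul]
    simpa [Module.Basis.coord_apply, smul_eq_mul] using LinearMap.congr_fun key w
  have hCA : ∀ k, Polynomial.C (1/4:ℂ) * A k ≠ 0 := by
    intro k
    exact mul_ne_zero (Polynomial.C_ne_zero.mpr (by norm_num)) (hA k)
  -- kernel characterization
  have hker : ∀ u, u ∈ LinearMap.ker (diracOp L V X Y) →
      u = b.repr u (Sum.inr 0) • b (Sum.inr 0) := by
    intro u hu
    have hu' : diracOp L V X Y u = 0 := hu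
    have hl : ∀ k, b.repr u (Sum.inl k) = 0 := by
      intro k
      have := hcl u k
      rw [hu'] at this
      simp only [map_zero, Finsupp.zero_apply] at this
      exact (mul_eq_zero.mp this.symm).resolve_left (hCA k)
    have hr : ∀ k, b.repr u (Sum.inr (k+1)) = 0 := by
      intro k
      have := hcr u k
      rw [hu'] at this
      simp only [map_zero, Finsupp.zero_apply] at this
      exact (mul_eq_zero.mp this.symm).resolve_left (hB k)
    apply b.repr.injective
    rw [map_smul, b.repr_self]
    ext i
    rcases i with j | j
    · simp [hl j, Finsupp.single_apply]
    · cases j with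
      | zero => simp [Finsupp.single_apply]
      | succ j => simp [hr j, Finsupp.single_apply]
  have hmem : ∀ c : (Polynomial ℂ), diracOp L V X Y (c • b (Sum.inr 0)) = 0 := by
    intro c
    rw [map_smul, hDr0, smul_zero]
  have hfree : ∀ c : (Polynomial ℂ), c • b (Sum.inr 0) = 0 → c = 0 := by
    intro c hc
    have := congrArg (fun z => b.repr z (Sum.inr 0)) hc
    simpa [b.repr_self, Finsupp.single_apply] using this
  have hkereq : LinearMap.ker (diracOp L V X Y)
      = Submodule.span (Polynomial ℂ) {v 0 ⊗ₜ[(Polynomial ℂ)] ((0:(Polynomial ℂ)), (1:(Polynomial ℂ)))} := by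
    ext u
    rw [Submodule.mem_span_singleton]
    constructor
    · intro hu
      exact ⟨b.repr u (Sum.inr 0), by rw [← hbr 0]; exact (hker u hu).symm⟩
    · rintro ⟨c, rfl⟩
      rw [LinearMap.mem_ker, ← hbr 0]
      exact hmem c
  refine ⟨hkereq, ?_, ?_, ?_⟩
  · rw [Submodule.disjoint_def]
    intro x hx hxr
    obtain ⟨w, rfl⟩ := hxr
    have h1 := hker _ hx
    rw [hc0 w, zero_smul] at h1
    exact h1
  · intro c hc
    apply hfree
    rw [hbr 0]
    exact hc
  · intro u hu
    have h1 := hker u hu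
    have hdiag : diagH L V H (v 0 ⊗ₜ[Polynomial ℂ] ((0:Polynomial ℂ), (1:Polynomial ℂ)))
        = (((m:ℕ):(Polynomial ℂ)) - 1)
            • (v 0 ⊗ₜ[Polynomial ℂ] ((0:Polynomial ℂ), (1:Polynomial ℂ))) := by
      have hH0 : ⁅H, v 0⁆ = ((m:ℕ):(Polynomial ℂ)) • v 0 := by simpa using hH 0
      simp only [diagH, LinearMap.add_apply, TensorProduct.map_tmul, LinearMap.id_coe,
        id_eq, LieModule.toEnd_apply_apply, hH0, spinAlphaH, LinearMap.prodMap_apply,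
        LinearMap.neg_apply]
      rw [show ((0:Polynomial ℂ), (-1:Polynomial ℂ)) = -((0:Polynomial ℂ), (1:Polynomial ℂ)) from by
          simp,
        TensorProduct.tmul_neg, ← TensorProduct.smul_tmul']
      module
    rw [h1, hbr 0, map_smul, hdiag, smul_smul, smul_smul, mul_comm]
end
end
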